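/- Let W be a nonempty closed convex subset of ℝ^d with diameter at most D (i.e., ‖w − w'‖ ≤ D for all w, w' ∈ W). Let η > 0, let F_1, …, F_T be convex real-valued functions, let w_0 ∈ W, and for each t = 1, …, T let w_t ∈ W satisfy the proximal optimality condition: for all w ∈ W, F_t(w_t) + (1/(2η))‖w_t − w_{t−1}‖² ≤ F_t(w) + (1/(2η))‖w − w_{t−1}‖². Then for every comparator sequence u_1, …, u_T ∈ W, the dynamic regret satisfies Σ_{t=1}^{T} (F_t(w_t) − F_t(u_t)) ≤ (1/(2η))‖u_1 − w_0‖² + (D/η) Σ_{t=2}^{T} ‖u_t − u_{t−1}‖. -/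

import Mathlib

/-!
The proximal step is the minimiser of `F_t` plus a `2c`-strongly convex quadratic with
`c = 1 / (2η)`, so comparing it with the points of the segment towards `u_t` gives the
three-point inequality `F_t w_t - F_t u_t ≤ c (‖u_t - w_{t-1}‖² - ‖u_t - w_t‖²)`.
Summing over `t`, the right-hand side telescopes up to the drift terms
`‖u_t - w_{t-1}‖² - ‖u_{t-1} - w_{t-1}‖²`, each at most `2D ‖u_t - u_{t-1}‖`
because both norms are at most `D`.
-/

open Finset Filter Topology
open scoped RealInnerProductSpace

lemma le_of_forall_mem_Ioc_le_add_mul {a b K : ℝ} (h : ∀ s ∈ Set.Ioc (0 : ℝ) 1, a ≤ b + s * K) :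
    a ≤ b := by
  have hlim : Tendsto (fun s : ℝ => b + s * K) (𝓝[>] 0) (𝓝 b) := by
    have hcont : Continuous fun s : ℝ => b + s * K := by fun_prop
    simpa using (hcont.tendsto 0).mono_left nhdsWithin_le_nhds
  refine ge_of_tendsto hlim ?_
  filter_upwards [Ioc_mem_nhdsGT (zero_lt_one' ℝ)] using h

section Proximal

variable {E : Type*} [NormedAddCommGroup E] [InnerProductSpace ℝ E]
  {W : Set E} {F : E → ℝ} {c : ℝ} {p w u : E}

lemma sub_le_inner_of_isMinOn_add_sq_norm (hW : Convex ℝ W) (hF : ConvexOn ℝ W F)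
    (hw : w ∈ W) (hu : u ∈ W) (hmin : IsMinOn (fun v => F v + c * ‖v - p‖ ^ 2) W w) :
    F w - F u ≤ 2 * c * ⟪w - p, u - w⟫ := by
  refine le_of_forall_mem_Ioc_le_add_mul (K := c * ‖u - w‖ ^ 2) fun s ⟨hs0, hs1⟩ => ?_
  have hv : (1 - s) • w + s • u ∈ W := hW hw hu (by linarith) hs0.le (by ring)
  have hFv : F ((1 - s) • w + s • u) ≤ (1 - s) * F w + s * F u :=
    hF.2 hw hu (by linarith) hs0.le (by ring)
  have hnorm : ‖(1 - s) • w + s • u - p‖ ^ 2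
      = ‖w - p‖ ^ 2 + 2 * s * ⟪w - p, u - w⟫ + s ^ 2 * ‖u - w‖ ^ 2 := by
    rw [show (1 - s) • w + s • u - p = (w - p) + s • (u - w) by module, norm_add_sq_real,
      norm_smul, real_inner_smul_right, mul_pow, Real.norm_eq_abs, sq_abs]
    ring
  have hopt := isMinOn_iff.mp hmin _ hv
  simp only [hnorm] at hopt
  have hscaled : s * (F w - F u) ≤ s * (2 * c * ⟪w - p, u - w⟫ + s * (c * ‖u - w‖ ^ 2)) := by
    linarith
  exact le_of_mul_le_mul_left hscaled hs0

lemma three_point_of_isMinOn_add_sq_norm (hW : Convex ℝ W) (hF : ConvexOn ℝ W F)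
    (hw : w ∈ W) (hu : u ∈ W) (hmin : IsMinOn (fun v => F v + c * ‖v - p‖ ^ 2) W w) :
    F w + c * ‖w - p‖ ^ 2 + c * ‖u - w‖ ^ 2 ≤ F u + c * ‖u - p‖ ^ 2 := by
  have hfirst := sub_le_inner_of_isMinOn_add_sq_norm hW hF hw hu hmin
  have hsplit : ‖u - p‖ ^ 2 = ‖w - p‖ ^ 2 + 2 * ⟪w - p, u - w⟫ + ‖u - w‖ ^ 2 := by
    rw [← norm_add_sq_real, sub_add_sub_cancel']
  rw [hsplit]
  linarith

end Proximal

lemma sq_norm_sub_sq_norm_le {E : Type*} [SeminormedAddCommGroup E] {x y : E} {D : ℝ}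
    (hx : ‖x‖ ≤ D) (hy : ‖y‖ ≤ D) : ‖x‖ ^ 2 - ‖y‖ ^ 2 ≤ 2 * D * ‖x - y‖ := by
  nlinarith [norm_sub_norm_le x y, norm_nonneg x, norm_nonneg y, norm_nonneg (x - y)]

lemma Finset.sum_Icc_one_sub_eq {G : Type*} [AddCommGroup G] (x y : ℕ → G) {T : ℕ}
    (hT : 1 ≤ T) :
    ∑ t ∈ Icc 1 T, (x t - y t) = x 1 - y T + ∑ t ∈ Icc 2 T, (x t - y (t - 1)) := by
  induction T, hT using Nat.le_induction with
  | base => simp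
  | succ T hT ih =>
    rw [sum_Icc_succ_top (by omega), sum_Icc_succ_top (by omega), ih, Nat.add_sub_cancel]
    abel

lemma sum_sq_norm_sub_le_path_length {E : Type*} [SeminormedAddCommGroup E] (u w : ℕ → E)
    {D : ℝ} {T : ℕ} (hD : ∀ s ∈ Icc 1 T, ∀ t ∈ Icc 1 T, ‖u s - w t‖ ≤ D) :
    ∑ t ∈ Icc 1 T, (‖u t - w (t - 1)‖ ^ 2 - ‖u t - w t‖ ^ 2)
      ≤ ‖u 1 - w 0‖ ^ 2 + 2 * D * ∑ t ∈ Icc 2 T, ‖u t - u (t - 1)‖ := by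
  rcases Nat.eq_zero_or_pos T with rfl | hT
  · simp
  have hdrift : ∀ t ∈ Icc 2 T,
      ‖u t - w (t - 1)‖ ^ 2 - ‖u (t - 1) - w (t - 1)‖ ^ 2 ≤ 2 * D * ‖u t - u (t - 1)‖ := by
    intro t ht
    obtain ⟨ht₂, htT⟩ := mem_Icc.mp ht
    have hprev : t - 1 ∈ Icc 1 T := mem_Icc.mpr ⟨by omega, by omega⟩
    have h := sq_norm_sub_sq_norm_le (hD t (mem_Icc.mpr ⟨by omega, htT⟩) _ hprev)
      (hD _ hprev _ hprev)
    rwa [sub_sub_sub_cancel_right] at h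
  rw [sum_Icc_one_sub_eq _ _ hT, mul_sum]
  linarith [sum_le_sum hdrift, sq_nonneg ‖u T - w T‖]

theorem dynamic_regret_path_length_general
    {d : ℕ} (W : Set (EuclideanSpace ℝ (Fin d)))
    (hWconv : Convex ℝ W)
    (D : ℝ) (hD : ∀ w ∈ W, ∀ w' ∈ W, ‖w - w'‖ ≤ D)
    (η : ℝ) (hη : 0 < η)
    (T : ℕ)
    (F : ℕ → EuclideanSpace ℝ (Fin d) → ℝ)
    (hF : ∀ t ∈ Finset.Icc 1 T, ConvexOn ℝ Set.univ (F t))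
    (w : ℕ → EuclideanSpace ℝ (Fin d))
    (hwmem : ∀ t ∈ Finset.Icc 1 T, w t ∈ W)
    (hwopt : ∀ t ∈ Finset.Icc 1 T, ∀ v ∈ W,
      F t (w t) + (1 / (2 * η)) * ‖w t - w (t - 1)‖ ^ 2
        ≤ F t v + (1 / (2 * η)) * ‖v - w (t - 1)‖ ^ 2)
    (u : ℕ → EuclideanSpace ℝ (Fin d))
    (hu : ∀ t ∈ Finset.Icc 1 T, u t ∈ W) :
    ∑ t ∈ Finset.Icc 1 T, (F t (w t) - F t (u t))
      ≤ (1 / (2 * η)) * ‖u 1 - w 0‖ ^ 2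
        + (D / η) * ∑ t ∈ Finset.Icc 2 T, ‖u t - u (t - 1)‖ := by
  set c := 1 / (2 * η)
  have hc : 0 ≤ c := by positivity
  have hstep : ∀ t ∈ Icc 1 T,
      F t (w t) - F t (u t) ≤ c * (‖u t - w (t - 1)‖ ^ 2 - ‖u t - w t‖ ^ 2) := fun t ht => by
    have h := three_point_of_isMinOn_add_sq_norm hWconv
      ((hF t ht).subset (Set.subset_univ W) hWconv) (hwmem t ht) (hu t ht)
      (isMinOn_iff.mpr (hwopt t ht))
    linarith [mul_nonneg hc (sq_nonneg ‖w t - w (t - 1)‖)]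
  have hpath := sum_sq_norm_sub_le_path_length u w (D := D)
    fun s hs t ht => hD _ (hu s hs) _ (hwmem t ht)
  calc ∑ t ∈ Icc 1 T, (F t (w t) - F t (u t))
      ≤ c * ∑ t ∈ Icc 1 T, (‖u t - w (t - 1)‖ ^ 2 - ‖u t - w t‖ ^ 2) := by
        rw [mul_sum]; exact sum_le_sum hstep
    _ ≤ c * (‖u 1 - w 0‖ ^ 2 + 2 * D * ∑ t ∈ Icc 2 T, ‖u t - u (t - 1)‖) := by gcongr
    _ = _ := by simp only [c]; field_simp

/-- Dynamic regret bound (path-length form) for the regularized online proximal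
update on a nonempty closed convex set of diameter at most `D`. -/
theorem dynamic_regret_path_length
    {d : ℕ} (W : Set (EuclideanSpace ℝ (Fin d)))
    (hWne : W.Nonempty) (hWclosed : IsClosed W) (hWconv : Convex ℝ W)
    (D : ℝ) (hD : ∀ w ∈ W, ∀ w' ∈ W, ‖w - w'‖ ≤ D)
    (η : ℝ) (hη : 0 < η)
    (T : ℕ)
    (F : ℕ → EuclideanSpace ℝ (Fin d) → ℝ)
    (hF : ∀ t ∈ Finset.Icc 1 T, ConvexOn ℝ Set.univ (F t))
    (w : ℕ → EuclideanSpace ℝ (Fin d))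
    (hw0 : w 0 ∈ W)
    (hwmem : ∀ t ∈ Finset.Icc 1 T, w t ∈ W)
    (hwopt : ∀ t ∈ Finset.Icc 1 T, ∀ v ∈ W,
      F t (w t) + (1 / (2 * η)) * ‖w t - w (t - 1)‖ ^ 2
        ≤ F t v + (1 / (2 * η)) * ‖v - w (t - 1)‖ ^ 2)
    (u : ℕ → EuclideanSpace ℝ (Fin d))
    (hu : ∀ t ∈ Finset.Icc 1 T, u t ∈ W) :
    ∑ t ∈ Finset.Icc 1 T, (F t (w t) - F t (u t))
      ≤ (1 / (2 * η)) * ‖u 1 - w 0‖ ^ 2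
        + (D / η) * ∑ t ∈ Finset.Icc 2 T, ‖u t - u (t - 1)‖ :=
  dynamic_regret_path_length_general W hWconv D hD η hη T F hF w hwmem hwopt u hu
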